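/- For all m ≥ 0 and all x, the Bernoulli polynomials satisfy B_m(x) = ∑_{n=0}^{m} D_n(x) S(m,n), where D_n(x) are the Daehee polynomials and S(m,n) are the Stirling numbers of the second kind. -/

import Mathlib

/-! Substituting `t = e^u - 1` turns the Daehee generating function into the Bernoulli one:
`log (1 + t)` becomes `u` and `(1 + t)^x` becomes `e^{xu}`. Both substitutions follow from the chain
rule `d/du f(e^u - 1) = ((1 + t) f'(t))|_{t = e^u - 1}`, since `log (1 + t)` and `(1 + t)^x` solve
`(1 + t) f' = 1` and `(1 + t) f' = x f`. Expanding `(e^u - 1)^n` by Stirling numbers and comparing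
coefficients of `u^m` gives the identity. -/

open PowerSeries Finset

noncomputable def logOneAdd : PowerSeries ℚ :=
  PowerSeries.mk fun k => if k = 0 then 0 else (-1 : ℚ)^(k+1) / k

noncomputable def onePow (x : ℚ) : PowerSeries ℚ :=
  PowerSeries.mk fun k => (∏ i ∈ Finset.range k, (x - (i : ℚ))) / (Nat.factorial k : ℚ)

noncomputable def expX (x : ℚ) : PowerSeries ℚ :=
  PowerSeries.mk fun k => x ^ k / (Nat.factorial k : ℚ)

namespace PowerSeries

section Subst

variable {R : Type*} [CommRing R]

theorem coeff_subst_eq_sum_range {b : R⟦X⟧} (hb : constantCoeff b = 0) (f : R⟦X⟧) (m : ℕ) :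
    coeff m (f.subst b) = ∑ n ∈ range (m + 1), coeff n f * coeff m (b ^ n) := by
  rw [coeff_subst' (HasSubst.of_constantCoeff_zero' hb)]
  refine finsum_eq_sum_of_support_subset _ fun n hn => mem_range.mpr ?_
  by_contra! hmn
  obtain ⟨g, rfl⟩ := X_dvd_iff.mpr hb
  simp [mul_pow, coeff_X_pow_mul', show ¬n ≤ m by omega] at hn

theorem constantCoeff_subst_of_constantCoeff_zero {b : R⟦X⟧} (hb : constantCoeff b = 0)
    (f : R⟦X⟧) : constantCoeff (f.subst b) = constantCoeff f := by
  simpa using coeff_subst_eq_sum_range hb f 0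

theorem one_subst {a : R⟦X⟧} (ha : HasSubst a) : (1 : R⟦X⟧).subst a = 1 := by
  rw [← coe_substAlgHom ha, map_one]

theorem eq_of_derivative_eq_smul_self [IsAddTorsionFree R] {c : R} {f g : R⟦X⟧}
    (hf : d⁄dX R f = c • f) (hg : d⁄dX R g = c • g) (h0 : constantCoeff f = constantCoeff g) :
    f = g := by
  have step : ∀ {h : R⟦X⟧}, d⁄dX R h = c • h → ∀ n : ℕ, (n + 1) • coeff (n + 1) h = c * coeff n h :=
    fun {h} hh n => by
      have := congrArg (coeff n) hh
      rw [coeff_derivative, coeff_smul, smul_eq_mul] at this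
      rw [← this, nsmul_eq_mul, mul_comm]
      push_cast; ring
  ext n
  induction n with
  | zero => simpa using h0
  | succ n ih => exact (smul_right_inj n.succ_ne_zero).mp (by rw [step hf, step hg, ih])

end Subst

section ExpSubOne

variable {A : Type*} [CommRing A] [Algebra ℚ A]

theorem constantCoeff_exp_sub_one : constantCoeff (exp A - 1) = 0 := by
  simp

theorem exp_sub_one_ne_zero [Nontrivial A] : exp A - 1 ≠ 0 := fun h => by
  simpa using congrArg (coeff 1) h

theorem one_add_X_subst_exp_sub_one : (1 + X : A⟦X⟧).subst (exp A - 1) = exp A := by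
  rw [subst_add HasSubst.exp_sub_one, subst_X HasSubst.exp_sub_one, one_subst HasSubst.exp_sub_one,
    add_sub_cancel]

theorem derivative_subst_exp_sub_one (f : A⟦X⟧) :
    d⁄dX A (f.subst (exp A - 1)) = ((1 + X) * d⁄dX A f).subst (exp A - 1) := by
  rw [derivative_subst HasSubst.exp_sub_one, subst_mul HasSubst.exp_sub_one,
    one_add_X_subst_exp_sub_one, map_sub, derivative_exp, derivative_one, sub_zero, mul_comm]

theorem one_add_X_mul_derivative_log : (1 + X) * d⁄dX A (log A) = 1 := by
  ext n
  rw [deriv_log, add_mul, one_mul, map_add]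
  cases n with
  | zero => simp
  | succ n => simp [pow_succ]

theorem log_subst_exp_sub_one [IsAddTorsionFree A] : (log A).subst (exp A - 1) = X := by
  apply derivative.ext
  · rw [derivative_subst_exp_sub_one, one_add_X_mul_derivative_log, derivative_X,
      one_subst HasSubst.exp_sub_one]
  · rw [constantCoeff_subst_of_constantCoeff_zero constantCoeff_exp_sub_one]; simp

end ExpSubOne

end PowerSeries

theorem logOneAdd_eq_log : logOneAdd = PowerSeries.log ℚ := by
  ext k; simp [logOneAdd]

theorem coeff_succ_onePow_mul (x : ℚ) (n : ℕ) :
    coeff (n + 1) (onePow x) * (n + 1) = (x - n) * coeff n (onePow x) := by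
  simp only [onePow, coeff_mk, prod_range_succ, Nat.factorial_succ]
  push_cast
  field_simp

theorem one_add_X_mul_derivative_onePow (x : ℚ) :
    (1 + X) * d⁄dX ℚ (onePow x) = x • onePow x := by
  ext n
  rw [add_mul, one_mul, map_add, coeff_derivative, coeff_succ_onePow_mul, coeff_smul, smul_eq_mul]
  cases n with
  | zero => simp
  | succ n => rw [coeff_succ_X_mul, coeff_derivative]; push_cast; ring

theorem derivative_expX (x : ℚ) : d⁄dX ℚ (expX x) = x • expX x := by
  ext n
  simp only [expX, coeff_derivative, coeff_smul, coeff_mk, smul_eq_mul, Nat.factorial_succ]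
  push_cast
  field_simp
  ring

theorem onePow_subst_exp_sub_one (x : ℚ) : (onePow x).subst (exp ℚ - 1) = expX x := by
  apply eq_of_derivative_eq_smul_self (c := x)
  · rw [derivative_subst_exp_sub_one, one_add_X_mul_derivative_onePow,
      subst_smul HasSubst.exp_sub_one]
  · exact derivative_expX x
  · rw [constantCoeff_subst_of_constantCoeff_zero constantCoeff_exp_sub_one]
    simp [onePow, expX, ← coeff_zero_eq_constantCoeff_apply]

theorem bernoulli_poly_daehee_stirling2 (Dp Bp : ℕ → ℚ → ℚ) (S : ℕ → ℕ → ℚ)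
    (hDp : ∀ x : ℚ, PowerSeries.mk (fun n => Dp n x / (Nat.factorial n : ℚ)) * PowerSeries.X = logOneAdd * onePow x) (hBp : ∀ x : ℚ, PowerSeries.mk (fun m => Bp m x / (Nat.factorial m : ℚ)) * (PowerSeries.exp ℚ - 1) = PowerSeries.X * expX x) (hS : ∀ n : ℕ, (PowerSeries.exp ℚ - 1) ^ n = PowerSeries.C (R := ℚ) (Nat.factorial n : ℚ) * PowerSeries.mk (fun m => S m n / (Nat.factorial m : ℚ))) :
    ∀ (m : ℕ) (x : ℚ), Bp m x = ∑ n ∈ Finset.range (m + 1), Dp n x * S m n := by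
  intro m x
  have hE : HasSubst (exp ℚ - 1) := HasSubst.exp_sub_one (A := ℚ)
  have hsubst : (mk fun n => Dp n x / n.factorial).subst (exp ℚ - 1) =
      mk fun m => Bp m x / m.factorial := by
    refine mul_right_cancel₀ exp_sub_one_ne_zero ?_
    calc _ = (mk (fun n => Dp n x / n.factorial) * X).subst (exp ℚ - 1) := by
          rw [subst_mul hE, subst_X hE]
      _ = X * expX x := by
          rw [hDp x, subst_mul hE, logOneAdd_eq_log, log_subst_exp_sub_one,
            onePow_subst_exp_sub_one]
      _ = _ := (hBp x).symm
  have hcoeff := congrArg (coeff m) hsubst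
  rw [coeff_subst_eq_sum_range constantCoeff_exp_sub_one] at hcoeff
  simp only [coeff_mk, hS, coeff_C_mul] at hcoeff
  rw [← div_left_inj' (Nat.cast_ne_zero.mpr m.factorial_ne_zero), ← hcoeff, sum_div]
  refine sum_congr rfl fun n _ => ?_
  field_simp
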